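/- arXiv:2004.12282 — 3 statements merged into one kernel-verified Lean document; each statement's English description precedes it below -/
import Mathlib

section
/- Let E be an m×n real matrix of rank r with SVD-partition U = [U₁ U₂], V = [V₁ V₂], S. Let A_xx (m×n), A_xv (m×v), A_zx (z×n), A_zv (z×v) and Φ (v×z) be real matrices such that I − A_zv·Φ is invertible. Suppose the matrix U₂ᵀ·[A_xx·V₂ A_xv] does not have full column rank, and let the stacked matrix col{N_xx, N_xv} (with N_xx having n−r rows and N_xv having v rows) be a matrix whose columns form a basis of the (right) null space of U₂ᵀ·[A_xx·V₂ A_xv]. Then the matrix Ω = U₂ᵀ·(A_xx + A_xv·Φ·(I − A_zv·Φ)⁻¹·A_zx)·V₂ has full column rank if and only if the matrix N_xv − Φ·(A_zx·V₂·N_xx + A_zv·N_xv) has full column rank. -/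
open Matrix

noncomputable section

/-- A real matrix has full column rank (FCR) iff its rank equals its number of columns. -/
def FCR {m n : Type*} [Fintype m] [Fintype n] (A : Matrix m n ℝ) : Prop :=
  A.rank = Fintype.card n

/-- A real matrix has full row rank (FRR) iff its rank equals its number of rows. -/
def FRR {m n : Type*} [Fintype m] [Fintype n] (A : Matrix m n ℝ) : Prop :=
  A.rank = Fintype.card m

/-- `E` is an `m × n` real matrix of rank `r` with SVD-partition
`U = [U₁ U₂]`, `V = [V₁ V₂]`, `S`: the matrices `U = [U₁ U₂]` and `V = [V₁ V₂]` are
orthogonal, `S` is an `r × r` diagonal matrix with positive diagonal entries,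
and `E = U₁ * S * V₁ᵀ`. -/
def IsSVDPartition {m n r : ℕ} (E : Matrix (Fin m) (Fin n) ℝ)
    (U₁ : Matrix (Fin m) (Fin r) ℝ) (U₂ : Matrix (Fin m) (Fin (m - r)) ℝ)
    (V₁ : Matrix (Fin n) (Fin r) ℝ) (V₂ : Matrix (Fin n) (Fin (n - r)) ℝ)
    (S : Matrix (Fin r) (Fin r) ℝ) : Prop :=
  r ≤ m ∧ r ≤ n ∧
    (Matrix.fromCols U₁ U₂)ᵀ * Matrix.fromCols U₁ U₂ = 1 ∧
    (Matrix.fromCols V₁ V₂)ᵀ * Matrix.fromCols V₁ V₂ = 1 ∧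
    (∃ d : Fin r → ℝ, (∀ i, 0 < d i) ∧ S = Matrix.diagonal d) ∧
    E = U₁ * S * V₁ᵀ ∧ E.rank = r

/-! With `W = (1 - A_zv Φ)⁻¹` and `P = Φ W A_zx V₂` one has
`Ω = U₂ᵀ [A_xx V₂  A_xv] · col{1, P}`, so `Ω x = 0` iff `col{x, P x}` lies in the null space,
i.e. equals `col{N_xx, N_xv} c` with `N_xx c = x` and `N_xv c = P (N_xx c)`. As the columns of
`col{N_xx, N_xv}` are independent, this identifies the kernel of `Ω` with that of `N_xv - P N_xx`.
Finally `y = Φ (A_zx V₂ x + A_zv y) ↔ y = P x`, because `t = A_zx V₂ x + A_zv Φ t` has the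
unique solution `t = W A_zx V₂ x`; so `N_xv - P N_xx` and `N_xv - Φ (A_zx V₂ N_xx + A_zv N_xv)`
have the same kernel. -/

lemma fcr_iff_ker_mulVecLin_eq_bot {p q : Type*} [Fintype p] [Fintype q] (A : Matrix p q ℝ) :
    FCR A ↔ LinearMap.ker A.mulVecLin = ⊥ := by
  have := LinearMap.finrank_range_add_finrank_ker A.mulVecLin
  rw [Module.finrank_fintype_fun_eq_card] at this
  rw [← Submodule.finrank_eq_zero, FCR, Matrix.rank]
  omega

lemma eq_mulVec_add_mulVec_iff {R a v z : Type*} [CommRing R] [Fintype a] [Fintype v] [Fintype z]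
    [DecidableEq z] {Φ : Matrix v z R} {A : Matrix z v R} (B : Matrix z a R)
    (hT : IsUnit (1 - A * Φ)) (x : a → R) (y : v → R) :
    y = Φ *ᵥ (B *ᵥ x + A *ᵥ y) ↔ y = (Φ * (1 - A * Φ)⁻¹ * B) *ᵥ x := by
  set T := 1 - A * Φ
  have hdet : IsUnit T.det := (isUnit_iff_isUnit_det T).mp hT
  have hT_apply (t : z → R) : T *ᵥ t = t - A *ᵥ (Φ *ᵥ t) := by
    rw [sub_mulVec, one_mulVec, mulVec_mulVec]
  rw [← mulVec_mulVec, ← mulVec_mulVec]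
  constructor
  · intro hy
    set t := B *ᵥ x + A *ᵥ y
    have hTt : T *ᵥ t = B *ᵥ x := by rw [hT_apply, ← hy, add_sub_cancel_right]
    rw [hy, ← hTt, mulVec_mulVec t, nonsing_inv_mul T hdet, one_mulVec]
  · intro hy
    set s := T⁻¹ *ᵥ (B *ᵥ x)
    have hs : s = B *ᵥ x + A *ᵥ (Φ *ᵥ s) := by
      rw [← sub_eq_iff_eq_add, ← hT_apply, mulVec_mulVec, mul_nonsing_inv T hdet, one_mulVec]
    rw [← hy] at hs
    exact hy.trans (congrArg _ hs)

lemma ker_mulVecLin_mul_fromRows_one_eq_bot_iff {R p a b k : Type*} [CommRing R] [Fintype a]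
    [Fintype b] [Fintype k] [DecidableEq a] {M : Matrix p (a ⊕ b) R} {N₁ : Matrix a k R}
    {N₂ : Matrix b k R} (hker : M * fromRows N₁ N₂ = 0)
    (hbasis : LinearMap.ker (fromRows N₁ N₂).mulVecLin = ⊥)
    (hspan : ∀ x, M *ᵥ x = 0 → ∃ c, fromRows N₁ N₂ *ᵥ c = x) (P : Matrix b a R) :
    LinearMap.ker (M * fromRows (1 : Matrix a a R) P).mulVecLin = ⊥ ↔
      LinearMap.ker (N₂ - P * N₁).mulVecLin = ⊥ := by
  have hfromRows (c : k → R) (x : a → R) :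
      fromRows N₁ N₂ *ᵥ c = fromRows 1 P *ᵥ x ↔ N₁ *ᵥ c = x ∧ N₂ *ᵥ c = P *ᵥ x := by
    rw [fromRows_mulVec, fromRows_mulVec, one_mulVec, Sum.elim_eq_iff]
  rw [ker_mulVecLin_eq_bot_iff, ker_mulVecLin_eq_bot_iff]
  simp only [sub_mulVec, sub_eq_zero, ← mulVec_mulVec]
  constructor
  · intro hinj c hc
    have hx := (hfromRows c (N₁ *ᵥ c)).mpr ⟨rfl, hc⟩
    have hN₁c : N₁ *ᵥ c = 0 := hinj _ (by rw [← hx, mulVec_mulVec, hker, zero_mulVec])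
    refine (ker_mulVecLin_eq_bot_iff.mp hbasis) c ?_
    rw [hx, hN₁c, mulVec_zero]
  · intro hinj x hx
    obtain ⟨c, hc⟩ := hspan _ hx
    obtain ⟨hN₁c, hN₂c⟩ := (hfromRows c x).mp hc
    rw [← hN₁c, hinj c (by rw [hN₂c, hN₁c]), mulVec_zero]

theorem omega_fcr_iff_nullBasis_fcr_general (m n r v z k : ℕ)
    (U₂ : Matrix (Fin m) (Fin (m - r)) ℝ)
    (V₂ : Matrix (Fin n) (Fin (n - r)) ℝ)
    (Axx : Matrix (Fin m) (Fin n) ℝ) (Axv : Matrix (Fin m) (Fin v) ℝ)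
    (Azx : Matrix (Fin z) (Fin n) ℝ) (Azv : Matrix (Fin z) (Fin v) ℝ)
    (Φ : Matrix (Fin v) (Fin z) ℝ) (hinv : IsUnit (1 - Azv * Φ))
    (Nxx : Matrix (Fin (n - r)) (Fin k) ℝ) (Nxv : Matrix (Fin v) (Fin k) ℝ)
    (hker : U₂ᵀ * Matrix.fromCols (Axx * V₂) Axv * Matrix.fromRows Nxx Nxv = 0)
    (hbasis : FCR (Matrix.fromRows Nxx Nxv))
    (hspan : ∀ x : Fin (n - r) ⊕ Fin v → ℝ,
      (U₂ᵀ * Matrix.fromCols (Axx * V₂) Axv).mulVec x = 0 →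
        ∃ c : Fin k → ℝ, (Matrix.fromRows Nxx Nxv).mulVec c = x) :
    FCR (U₂ᵀ * (Axx + Axv * Φ * (1 - Azv * Φ)⁻¹ * Azx) * V₂) ↔
      FCR (Nxv - Φ * (Azx * V₂ * Nxx + Azv * Nxv)) := by
  have hΩ : U₂ᵀ * (Axx + Axv * Φ * (1 - Azv * Φ)⁻¹ * Azx) * V₂ =
      U₂ᵀ * fromCols (Axx * V₂) Axv *
        fromRows (1 : Matrix (Fin (n - r)) (Fin (n - r)) ℝ) (Φ * (1 - Azv * Φ)⁻¹ * (Azx * V₂)) := by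
    rw [Matrix.mul_assoc _ (fromCols _ _), fromCols_mul_fromRows]
    simp only [Matrix.mul_add, Matrix.add_mul, Matrix.mul_one, Matrix.mul_assoc]
  rw [fcr_iff_ker_mulVecLin_eq_bot, fcr_iff_ker_mulVecLin_eq_bot, hΩ,
    ker_mulVecLin_mul_fromRows_one_eq_bot_iff hker
      ((fcr_iff_ker_mulVecLin_eq_bot _).mp hbasis) hspan]
  congr! 1
  ext c
  simp only [LinearMap.mem_ker, mulVecLin_apply, sub_mulVec, sub_eq_zero, ← mulVec_mulVec,
    add_mulVec]
  simpa only [← mulVec_mulVec] using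
    (eq_mulVec_add_mulVec_iff (Azx * V₂) hinv (Nxx *ᵥ c) (Nxv *ᵥ c)).symm

/-- When `U₂ᵀ·[A_xx·V₂  A_xv]` is not of full column rank and the columns of
`col{N_xx, N_xv}` form a basis of its null space, `Ω` has full column rank iff
`N_xv − Φ·(A_zx·V₂·N_xx + A_zv·N_xv)` has full column rank. -/
theorem omega_fcr_iff_nullBasis_fcr (m n r v z k : ℕ)
    (E : Matrix (Fin m) (Fin n) ℝ)
    (U₁ : Matrix (Fin m) (Fin r) ℝ) (U₂ : Matrix (Fin m) (Fin (m - r)) ℝ)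
    (V₁ : Matrix (Fin n) (Fin r) ℝ) (V₂ : Matrix (Fin n) (Fin (n - r)) ℝ)
    (S : Matrix (Fin r) (Fin r) ℝ)
    (hsvd : IsSVDPartition E U₁ U₂ V₁ V₂ S)
    (Axx : Matrix (Fin m) (Fin n) ℝ) (Axv : Matrix (Fin m) (Fin v) ℝ)
    (Azx : Matrix (Fin z) (Fin n) ℝ) (Azv : Matrix (Fin z) (Fin v) ℝ)
    (Φ : Matrix (Fin v) (Fin z) ℝ) (hinv : IsUnit (1 - Azv * Φ))
    (hnot : ¬ FCR (U₂ᵀ * Matrix.fromCols (Axx * V₂) Axv))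
    (Nxx : Matrix (Fin (n - r)) (Fin k) ℝ) (Nxv : Matrix (Fin v) (Fin k) ℝ)
    (hker : U₂ᵀ * Matrix.fromCols (Axx * V₂) Axv * Matrix.fromRows Nxx Nxv = 0)
    (hbasis : FCR (Matrix.fromRows Nxx Nxv))
    (hspan : ∀ x : Fin (n - r) ⊕ Fin v → ℝ,
      (U₂ᵀ * Matrix.fromCols (Axx * V₂) Axv).mulVec x = 0 →
        ∃ c : Fin k → ℝ, (Matrix.fromRows Nxx Nxv).mulVec c = x) :
    FCR (U₂ᵀ * (Axx + Axv * Φ * (1 - Azv * Φ)⁻¹ * Azx) * V₂) ↔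
      FCR (Nxv - Φ * (Azx * V₂ * Nxx + Azv * Nxv)) :=
  omega_fcr_iff_nullBasis_fcr_general m n r v z k U₂ V₂ Axx Axv Azx Azv Φ hinv Nxx Nxv hker hbasis
    hspan
end
end

section
/- Let E be an n×n real matrix of rank r with SVD-partition U = [U₁ U₂], V = [V₁ V₂], S. Let B_x (n×u), B_z (z×u), A_xv (n×v), A_zv (z×v) and Φ (v×z) be real matrices such that I − A_zv·Φ is invertible. Suppose the stacked matrix col{U₂ᵀ·B_x, B_z} does not have full row rank, and let [N_Bx N_Bz] (with N_Bx having n−r columns and N_Bz having z columns) be a matrix whose rows form a basis of the left null space of col{U₂ᵀ·B_x, B_z}. Then the matrix [E B] with B = B_x + A_xv·Φ·(I − A_zv·Φ)⁻¹·B_z has full row rank if and only if the matrix N_Bz − (N_Bx·U₂ᵀ·A_xv + N_Bz·A_zv)·Φ has full row rank. -/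
open Matrix

noncomputable section

/-!
The left null space of `E = U₁ S V₁ᵀ` is the row space of `U₂ᵀ`, so `[E B]` has full row rank
iff `U₂ᵀ B` does. Write `U₂ᵀ B = U₂ᵀ B_x + G B_z` with `G = U₂ᵀ A_xv Φ (I - A_zv Φ)⁻¹`. A row
vector `η` kills it iff `(η, η G)` lies in the left null space of `col{U₂ᵀ B_x, B_z}`, i.e.
`(η, η G) = c [N_Bx N_Bz]`; then `η = c N_Bx` and `c (N_Bz - N_Bx G) = 0`. Hence `U₂ᵀ B` has full
row rank iff `N_Bz - N_Bx G` does, and multiplying on the right by the invertible `I - A_zv Φ`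
turns the latter into `N_Bz - (N_Bx U₂ᵀ A_xv + N_Bz A_zv) Φ`.
-/

section LeftNullBasis

variable {k l m n m₁ m₂ : Type*} [Fintype k] [Fintype l] [Fintype m] [Fintype n] [Fintype m₁]
  [Fintype m₂]

lemma frr_iff_vecMul_eq_zero (A : Matrix m n ℝ) : FRR A ↔ ∀ x : m → ℝ, x ᵥ* A = 0 → x = 0 := by
  rw [FRR, rank_eq_finrank_span_row, eq_comm, ← Set.finrank,
    ← linearIndependent_iff_card_eq_finrank_span, ← vecMul_injective_iff, ← coe_vecMulLinear,
    injective_iff_map_eq_zero]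
  rfl

lemma frr_mul_iff_of_isUnit [DecidableEq n] (A : Matrix m n ℝ) {W : Matrix n n ℝ}
    (hW : IsUnit W) : FRR (A * W) ↔ FRR A := by
  rw [FRR, FRR, rank_mul_eq_left_of_isUnit_det _ _ ((isUnit_iff_isUnit_det W).mp hW)]

structure IsLeftNullBasis (N : Matrix k m ℝ) (M : Matrix m n ℝ) : Prop where
  mul_eq_zero : N * M = 0
  frr : FRR N
  exists_vecMul_eq : ∀ ξ : m → ℝ, ξ ᵥ* M = 0 → ∃ c : k → ℝ, c ᵥ* N = ξ

lemma IsLeftNullBasis.frr_fromCols_iff {P : Matrix k m ℝ} {E : Matrix m n ℝ}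
    (hP : IsLeftNullBasis P E) (B : Matrix m l ℝ) : FRR (fromCols E B) ↔ FRR (P * B) := by
  have hPinj := (frr_iff_vecMul_eq_zero P).mp hP.frr
  simp only [frr_iff_vecMul_eq_zero, vecMul_fromCols, ← Sum.elim_zero_zero, Sum.elim_eq_iff]
  constructor
  · intro h η hη
    apply hPinj
    refine h _ ⟨?_, ?_⟩
    · rw [vecMul_vecMul, hP.mul_eq_zero, vecMul_zero]
    · rwa [vecMul_vecMul]
  · rintro h ξ ⟨hξE, hξB⟩
    obtain ⟨η, rfl⟩ := hP.exists_vecMul_eq ξ hξE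
    rw [h η (by rwa [← vecMul_vecMul]), zero_vecMul]

lemma IsLeftNullBasis.frr_add_mul_iff {N₁ : Matrix k m₁ ℝ} {N₂ : Matrix k m₂ ℝ}
    {M₁ : Matrix m₁ n ℝ} {M₂ : Matrix m₂ n ℝ}
    (hN : IsLeftNullBasis (fromCols N₁ N₂) (fromRows M₁ M₂)) (G : Matrix m₁ m₂ ℝ) :
    FRR (M₁ + G * M₂) ↔ FRR (N₂ - N₁ * G) := by
  have hNinj := (frr_iff_vecMul_eq_zero _).mp hN.frr
  simp only [frr_iff_vecMul_eq_zero]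
  constructor
  · intro h c hc
    rw [vecMul_sub, sub_eq_zero, ← vecMul_vecMul] at hc
    have hη : c ᵥ* N₁ = 0 := by
      apply h
      have := congrArg (c ᵥ* ·) hN.mul_eq_zero
      simpa [← vecMul_vecMul, vecMul_fromCols, sumElim_vecMul_fromRows, vecMul_add, hc]
        using this
    apply hNinj
    rw [vecMul_fromCols, hc, hη, zero_vecMul, Sum.elim_zero_zero]
  · intro h η hη
    obtain ⟨c, hc⟩ := hN.exists_vecMul_eq (Sum.elim η (η ᵥ* G)) (by
      rwa [sumElim_vecMul_fromRows, vecMul_vecMul, ← vecMul_add])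
    rw [vecMul_fromCols, Sum.elim_eq_iff] at hc
    rw [← hc.1, h c (by rw [vecMul_sub, ← vecMul_vecMul, hc.1, hc.2, sub_self])]
    exact zero_vecMul _

end LeftNullBasis

section Orthogonal

variable {R m n₁ n₂ : Type*} [CommRing R] [Fintype m]
  {A₁ : Matrix m n₁ R} {A₂ : Matrix m n₂ R}

lemma fromCols_transpose_mul_fromCols_eq_one_iff [DecidableEq n₁] [DecidableEq n₂] :
    (fromCols A₁ A₂)ᵀ * fromCols A₁ A₂ = 1 ↔
      A₁ᵀ * A₁ = 1 ∧ A₁ᵀ * A₂ = 0 ∧ A₂ᵀ * A₁ = 0 ∧ A₂ᵀ * A₂ = 1 := by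
  rw [transpose_fromCols, fromRows_mul_fromCols, ← fromBlocks_one, fromBlocks_inj]

lemma mul_transpose_add_mul_transpose_eq_one [Fintype n₁] [Fintype n₂] [DecidableEq m]
    [DecidableEq n₁] [DecidableEq n₂]
    (e : m ≃ n₁ ⊕ n₂) (h : (fromCols A₁ A₂)ᵀ * fromCols A₁ A₂ = 1) :
    A₁ * A₁ᵀ + A₂ * A₂ᵀ = 1 := by
  rwa [transpose_fromCols, ← fromCols_mul_fromRows_eq_one_comm e, fromCols_mul_fromRows] at h

end Orthogonal

lemma IsSVDPartition.isLeftNullBasis {m n r : ℕ} {E : Matrix (Fin m) (Fin n) ℝ}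
    {U₁ : Matrix (Fin m) (Fin r) ℝ} {U₂ : Matrix (Fin m) (Fin (m - r)) ℝ}
    {V₁ : Matrix (Fin n) (Fin r) ℝ} {V₂ : Matrix (Fin n) (Fin (n - r)) ℝ}
    {S : Matrix (Fin r) (Fin r) ℝ} (h : IsSVDPartition E U₁ U₂ V₁ V₂ S) :
    IsLeftNullBasis U₂ᵀ E := by
  obtain ⟨hrm, -, hU, hV, ⟨d, hd, rfl⟩, rfl, -⟩ := h
  obtain ⟨-, -, hU₂₁, hU₂₂⟩ := fromCols_transpose_mul_fromCols_eq_one_iff.mp hU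
  have hV₁₁ := (fromCols_transpose_mul_fromCols_eq_one_iff.mp hV).1
  have hUUt := mul_transpose_add_mul_transpose_eq_one
    (finSumFinEquiv.trans (finCongr (Nat.add_sub_cancel' hrm))).symm hU
  refine ⟨?_, ?_, fun ξ hξ => ⟨ξ ᵥ* U₂, ?_⟩⟩
  · rw [← Matrix.mul_assoc, ← Matrix.mul_assoc, hU₂₁, Matrix.zero_mul, Matrix.zero_mul]
  · rw [frr_iff_vecMul_eq_zero]
    intro x hx
    simpa [vecMul_vecMul, hU₂₂] using congrArg (· ᵥ* U₂) hx
  · have hS : IsUnit (diagonal d) :=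
      isUnit_diagonal.mpr (Pi.isUnit_iff.mpr fun i => (hd i).ne'.isUnit)
    have hξU₁ : ξ ᵥ* U₁ = 0 := by
      apply vecMul_injective_of_isUnit hS
      simpa [vecMul_vecMul, Matrix.mul_assoc, hV₁₁] using congrArg (· ᵥ* V₁) hξ
    calc (ξ ᵥ* U₂) ᵥ* U₂ᵀ = (ξ ᵥ* U₁) ᵥ* U₁ᵀ + (ξ ᵥ* U₂) ᵥ* U₂ᵀ := by
          rw [hξU₁, zero_vecMul, zero_add]
      _ = ξ := by rw [vecMul_vecMul, vecMul_vecMul, ← vecMul_add, hUUt, vecMul_one]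

theorem concat_frr_iff_leftNullBasis_frr_general (n r u v z k : ℕ)
    (E : Matrix (Fin n) (Fin n) ℝ)
    (U₁ : Matrix (Fin n) (Fin r) ℝ) (U₂ : Matrix (Fin n) (Fin (n - r)) ℝ)
    (V₁ : Matrix (Fin n) (Fin r) ℝ) (V₂ : Matrix (Fin n) (Fin (n - r)) ℝ)
    (S : Matrix (Fin r) (Fin r) ℝ)
    (hsvd : IsSVDPartition E U₁ U₂ V₁ V₂ S)
    (Bx : Matrix (Fin n) (Fin u) ℝ) (Bz : Matrix (Fin z) (Fin u) ℝ)
    (Axv : Matrix (Fin n) (Fin v) ℝ) (Azv : Matrix (Fin z) (Fin v) ℝ)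
    (Φ : Matrix (Fin v) (Fin z) ℝ) (hinv : IsUnit (1 - Azv * Φ))
    (NBx : Matrix (Fin k) (Fin (n - r)) ℝ) (NBz : Matrix (Fin k) (Fin z) ℝ)
    (hker : Matrix.fromCols NBx NBz * Matrix.fromRows (U₂ᵀ * Bx) Bz = 0)
    (hbasis : FRR (Matrix.fromCols NBx NBz))
    (hspan : ∀ ξ : Fin (n - r) ⊕ Fin z → ℝ,
      Matrix.vecMul ξ (Matrix.fromRows (U₂ᵀ * Bx) Bz) = 0 →
        ∃ c : Fin k → ℝ, Matrix.vecMul c (Matrix.fromCols NBx NBz) = ξ) :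
    FRR (Matrix.fromCols E (Bx + Axv * Φ * (1 - Azv * Φ)⁻¹ * Bz)) ↔
      FRR (NBz - (NBx * U₂ᵀ * Axv + NBz * Azv) * Φ) := by
  set W := 1 - Azv * Φ
  set G := U₂ᵀ * Axv * Φ * W⁻¹
  have hB : U₂ᵀ * (Bx + Axv * Φ * W⁻¹ * Bz) = U₂ᵀ * Bx + G * Bz := by
    simp only [G, Matrix.mul_add, Matrix.mul_assoc]
  have hGW : G * W = U₂ᵀ * Axv * Φ := by
    rw [Matrix.mul_assoc, nonsing_inv_mul _ ((isUnit_iff_isUnit_det W).mp hinv), Matrix.mul_one]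
  have hN : NBz - (NBx * U₂ᵀ * Axv + NBz * Azv) * Φ = (NBz - NBx * G) * W := by
    rw [Matrix.sub_mul, Matrix.mul_assoc NBx G W, hGW]
    simp only [W, Matrix.mul_sub, Matrix.mul_one, Matrix.add_mul, Matrix.mul_assoc]
    abel
  rw [hsvd.isLeftNullBasis.frr_fromCols_iff, hB,
    IsLeftNullBasis.frr_add_mul_iff ⟨hker, hbasis, hspan⟩, hN, frr_mul_iff_of_isUnit _ hinv]

/-- When `col{U₂ᵀ·B_x, B_z}` is not of full row rank and the rows of
`[N_Bx  N_Bz]` form a basis of its left null space, `[E  B]` with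
`B = B_x + A_xv·Φ·(I − A_zv·Φ)⁻¹·B_z` has full row rank iff
`N_Bz − (N_Bx·U₂ᵀ·A_xv + N_Bz·A_zv)·Φ` has full row rank. -/
theorem concat_frr_iff_leftNullBasis_frr (n r u v z k : ℕ)
    (E : Matrix (Fin n) (Fin n) ℝ)
    (U₁ : Matrix (Fin n) (Fin r) ℝ) (U₂ : Matrix (Fin n) (Fin (n - r)) ℝ)
    (V₁ : Matrix (Fin n) (Fin r) ℝ) (V₂ : Matrix (Fin n) (Fin (n - r)) ℝ)
    (S : Matrix (Fin r) (Fin r) ℝ)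
    (hsvd : IsSVDPartition E U₁ U₂ V₁ V₂ S)
    (Bx : Matrix (Fin n) (Fin u) ℝ) (Bz : Matrix (Fin z) (Fin u) ℝ)
    (Axv : Matrix (Fin n) (Fin v) ℝ) (Azv : Matrix (Fin z) (Fin v) ℝ)
    (Φ : Matrix (Fin v) (Fin z) ℝ) (hinv : IsUnit (1 - Azv * Φ))
    (hnot : ¬ FRR (Matrix.fromRows (U₂ᵀ * Bx) Bz))
    (NBx : Matrix (Fin k) (Fin (n - r)) ℝ) (NBz : Matrix (Fin k) (Fin z) ℝ)
    (hker : Matrix.fromCols NBx NBz * Matrix.fromRows (U₂ᵀ * Bx) Bz = 0)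
    (hbasis : FRR (Matrix.fromCols NBx NBz))
    (hspan : ∀ ξ : Fin (n - r) ⊕ Fin z → ℝ,
      Matrix.vecMul ξ (Matrix.fromRows (U₂ᵀ * Bx) Bz) = 0 →
        ∃ c : Fin k → ℝ, Matrix.vecMul c (Matrix.fromCols NBx NBz) = ξ) :
    FRR (Matrix.fromCols E (Bx + Axv * Φ * (1 - Azv * Φ)⁻¹ * Bz)) ↔
      FRR (NBz - (NBx * U₂ᵀ * Axv + NBz * Azv) * Φ) :=
  concat_frr_iff_leftNullBasis_frr_general n r u v z k E U₁ U₂ V₁ V₂ S hsvd Bx Bz Axv Azv Φ hinv NBx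
    NBz hker hbasis hspan
end
end

section
/- For i = 1,…,N let E(i) be an m_i×n_i real matrix of rank r_i with SVD-partition U(i) = [U₁(i) U₂(i)], V(i) = [V₁(i) V₂(i)], S(i), and let B_x(i) (m_i×u_i), B_z(i) (z_i×u_i), A_xv(i) (m_i×v_i), A_zv(i) (z_i×v_i) be real matrices. Form the block-diagonal matrices E = diag{E(i)}, B_x = diag{B_x(i)}, B_z = diag{B_z(i)}, A_xv = diag{A_xv(i)}, A_zv = diag{A_zv(i)}, U₂ = diag{U₂(i)}. Assume that for each i ∈ {1,…,N} the stacked matrix col{U₂(i)ᵀ·B_x(i), B_z(i)} has full row rank. Then for every real matrix Φ (of size Σᵢ v_i × Σᵢ z_i) such that I − A_zv·Φ is invertible, the matrix [E B] has full row rank, where B = B_x + A_xv·Φ·(I − A_zv·Φ)⁻¹·B_z. -/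
open Matrix

noncomputable section

/-!
A vector `y` in the left kernel of `[E  B]` splits into blocks `y(i)`. From `y·E = 0`,
each `y(i)` annihilates `U₁(i)` (as `S(i)` is invertible and `V₁(i)` has orthonormal
columns), so `y(i) = w(i)·U₂(i)ᵀ` with `w(i) = y(i)·U₂(i)`. Writing `B = B_x + Ξ·B_z` and
`ξ = y·Ξ`, the equation `y·B = 0` reads blockwise `y(i)·B_x(i) + ξ(i)·B_z(i) = 0`, i.e.
`(w(i), ξ(i))·col{U₂(i)ᵀ·B_x(i), B_z(i)} = 0`, whence `w(i) = 0` and `y(i) = 0`.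
-/

theorem frr_iff_forall_vecMul_eq_zero {m n : Type*} [Fintype m] [Fintype n]
    (A : Matrix m n ℝ) : FRR A ↔ ∀ x : m → ℝ, x ᵥ* A = 0 → x = 0 := by
  have hrows : FRR A ↔ LinearIndependent ℝ A.row := by
    rw [FRR, rank_eq_finrank_span_row, linearIndependent_iff_card_eq_finrank_span,
      Set.finrank, eq_comm]
  rw [hrows, ← vecMul_injective_iff, ← coe_vecMulLinear, injective_iff_map_eq_zero]
  rfl

theorem frr_fromCols_add_mul {m n u z : Type*} [Fintype m] [Fintype n] [Fintype u]
    [Fintype z] {E : Matrix m n ℝ} {Bx : Matrix m u ℝ} {Bz : Matrix z u ℝ}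
    (h : ∀ (y : m → ℝ) (ξ : z → ℝ), y ᵥ* E = 0 → y ᵥ* Bx + ξ ᵥ* Bz = 0 → y = 0)
    (Ξ : Matrix m z ℝ) : FRR (fromCols E (Bx + Ξ * Bz)) := by
  refine (frr_iff_forall_vecMul_eq_zero _).mpr fun y hy => ?_
  rw [vecMul_fromCols, ← Sum.elim_zero_zero, Sum.elim_eq_iff, vecMul_add,
    ← vecMul_vecMul] at hy
  exact h y (y ᵥ* Ξ) hy.1 hy.2

section BlockDiagonal

variable {ι R : Type*} [Fintype ι] [DecidableEq ι] {m n : ι → Type*} [∀ i, Fintype (m i)]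

theorem vecMul_blockDiagonal'_apply [NonUnitalNonAssocSemiring R]
    (M : ∀ i, Matrix (m i) (n i) R) (y : (Σ i, m i) → R) (i : ι) (j : n i) :
    (y ᵥ* blockDiagonal' M) ⟨i, j⟩ = ((fun k => y ⟨i, k⟩) ᵥ* M i) j := by
  simp only [vecMul, dotProduct]
  rw [← Finset.univ_sigma_univ, Finset.sum_sigma, Finset.sum_eq_single i]
  · simp [blockDiagonal'_apply_eq]
  · intro i' _ hi'
    exact Finset.sum_eq_zero fun k _ => by rw [blockDiagonal'_apply_ne _ _ _ hi', mul_zero]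
  · simp

theorem eq_zero_of_vecMul_blockDiagonal'_eq_zero [NonUnitalNonAssocSemiring R]
    {u z : ι → Type*} [∀ i, Fintype (z i)]
    {E : ∀ i, Matrix (m i) (n i) R} {Bx : ∀ i, Matrix (m i) (u i) R}
    {Bz : ∀ i, Matrix (z i) (u i) R}
    (h : ∀ i (y : m i → R) (ξ : z i → R), y ᵥ* E i = 0 → y ᵥ* Bx i + ξ ᵥ* Bz i = 0 → y = 0)
    (y : (Σ i, m i) → R) (ξ : (Σ i, z i) → R) (hyE : y ᵥ* blockDiagonal' E = 0)
    (hyB : y ᵥ* blockDiagonal' Bx + ξ ᵥ* blockDiagonal' Bz = 0) : y = 0 := by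
  funext ⟨i, j⟩
  refine congrFun (h i (fun k => y ⟨i, k⟩) (fun k => ξ ⟨i, k⟩) ?_ ?_) j
  · funext k
    simpa only [vecMul_blockDiagonal'_apply, Pi.zero_apply] using congrFun hyE ⟨i, k⟩
  · funext k
    simpa only [Pi.add_apply, vecMul_blockDiagonal'_apply, Pi.zero_apply] using congrFun hyB ⟨i, k⟩

end BlockDiagonal

theorem transpose_mul_self_eq_one_of_fromCols {m r s R : Type*} [Fintype m]
    [DecidableEq r] [DecidableEq s] [Semiring R] {U₁ : Matrix m r R} {U₂ : Matrix m s R}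
    (hU : (fromCols U₁ U₂)ᵀ * fromCols U₁ U₂ = 1) : U₁ᵀ * U₁ = 1 := by
  rw [transpose_fromCols, fromRows_mul_fromCols, ← fromBlocks_one] at hU
  exact (fromBlocks_inj.mp hU).1

theorem eq_vecMul_vecMul_transpose_of_vecMul_eq_zero {m r s R : Type*} [Fintype m]
    [Fintype r] [Fintype s] [DecidableEq m] [CommSemiring R]
    {U₁ : Matrix m r R} {U₂ : Matrix m s R} (hU : fromCols U₁ U₂ * (fromCols U₁ U₂)ᵀ = 1)
    {x : m → R} (hx : x ᵥ* U₁ = 0) : x = (x ᵥ* U₂) ᵥ* U₂ᵀ := by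
  calc x = x ᵥ* (fromCols U₁ U₂ * (fromCols U₁ U₂)ᵀ) := by rw [hU, vecMul_one]
    _ = (x ᵥ* U₂) ᵥ* U₂ᵀ := by
      rw [← vecMul_vecMul, vecMul_fromCols, hx, transpose_fromCols, sumElim_vecMul_fromRows,
        zero_vecMul, zero_add]

namespace IsSVDPartition

variable {m n r : ℕ} {E : Matrix (Fin m) (Fin n) ℝ} {U₁ : Matrix (Fin m) (Fin r) ℝ}
  {U₂ : Matrix (Fin m) (Fin (m - r)) ℝ} {V₁ : Matrix (Fin n) (Fin r) ℝ}
  {V₂ : Matrix (Fin n) (Fin (n - r)) ℝ} {S : Matrix (Fin r) (Fin r) ℝ}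

theorem vecMul_U₁_eq_zero (h : IsSVDPartition E U₁ U₂ V₁ V₂ S) {x : Fin m → ℝ}
    (hx : x ᵥ* E = 0) : x ᵥ* U₁ = 0 := by
  obtain ⟨-, -, -, hV, ⟨d, hd, rfl⟩, rfl, -⟩ := h
  have hUS : x ᵥ* U₁ ᵥ* diagonal d = 0 := by
    rw [vecMul_vecMul, ← Matrix.mul_one (U₁ * diagonal d),
      ← transpose_mul_self_eq_one_of_fromCols hV, ← Matrix.mul_assoc, ← vecMul_vecMul, hx, zero_vecMul]
  funext k
  simpa [vecMul_diagonal, (hd k).ne'] using congrFun hUS k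

theorem eq_vecMul_U₂_vecMul_transpose (h : IsSVDPartition E U₁ U₂ V₁ V₂ S) {x : Fin m → ℝ}
    (hx : x ᵥ* E = 0) : x = (x ᵥ* U₂) ᵥ* U₂ᵀ := by
  have hUUt : fromCols U₁ U₂ * (fromCols U₁ U₂)ᵀ = 1 :=
    (mul_eq_one_comm_of_equiv (finSumFinEquiv.trans (finCongr (Nat.add_sub_cancel' h.1)))).mp
      h.2.2.1
  exact eq_vecMul_vecMul_transpose_of_vecMul_eq_zero hUUt (h.vecMul_U₁_eq_zero hx)

theorem eq_zero_of_vecMul_eq_zero (h : IsSVDPartition E U₁ U₂ V₁ V₂ S) {u z : Type*}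
    [Fintype u] [Fintype z] {Bx : Matrix (Fin m) u ℝ} {Bz : Matrix z u ℝ}
    (hB : FRR (fromRows (U₂ᵀ * Bx) Bz)) (y : Fin m → ℝ) (ξ : z → ℝ) (hyE : y ᵥ* E = 0)
    (hyB : y ᵥ* Bx + ξ ᵥ* Bz = 0) : y = 0 := by
  have hy := h.eq_vecMul_U₂_vecMul_transpose hyE
  have hw : Sum.elim (y ᵥ* U₂) ξ ᵥ* fromRows (U₂ᵀ * Bx) Bz = 0 := by
    rwa [sumElim_vecMul_fromRows, ← vecMul_vecMul, ← hy]
  have hw0 := (frr_iff_forall_vecMul_eq_zero _).mp hB _ hw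
  rw [hy, show y ᵥ* U₂ = 0 from funext fun k => congrFun hw0 (Sum.inl k), zero_vecMul]

end IsSVDPartition

/-- Corollary 1, second part: if for each subsystem `i` the matrix
`col{U₂(i)ᵀ·B_x(i), B_z(i)}` has full row rank, then for every `Φ` with
`I − A_zv·Φ` invertible, the global matrix `[E  B]` with
`B = B_x + A_xv·Φ·(I − A_zv·Φ)⁻¹·B_z` has full row rank. -/
theorem frr_of_subsystem_conditions (N : ℕ) (m n r u v z : Fin N → ℕ)
    (E : ∀ i, Matrix (Fin (m i)) (Fin (n i)) ℝ)
    (U₁ : ∀ i, Matrix (Fin (m i)) (Fin (r i)) ℝ)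
    (U₂ : ∀ i, Matrix (Fin (m i)) (Fin (m i - r i)) ℝ)
    (V₁ : ∀ i, Matrix (Fin (n i)) (Fin (r i)) ℝ)
    (V₂ : ∀ i, Matrix (Fin (n i)) (Fin (n i - r i)) ℝ)
    (S : ∀ i, Matrix (Fin (r i)) (Fin (r i)) ℝ)
    (hsvd : ∀ i, IsSVDPartition (E i) (U₁ i) (U₂ i) (V₁ i) (V₂ i) (S i))
    (Bx : ∀ i, Matrix (Fin (m i)) (Fin (u i)) ℝ)
    (Bz : ∀ i, Matrix (Fin (z i)) (Fin (u i)) ℝ)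
    (Axv : ∀ i, Matrix (Fin (m i)) (Fin (v i)) ℝ)
    (Azv : ∀ i, Matrix (Fin (z i)) (Fin (v i)) ℝ)
    (hsub : ∀ i, FRR (Matrix.fromRows ((U₂ i)ᵀ * Bx i) (Bz i))) :
    ∀ Φ : Matrix ((i : Fin N) × Fin (v i)) ((i : Fin N) × Fin (z i)) ℝ,
      IsUnit (1 - Matrix.blockDiagonal' Azv * Φ) →
      FRR (Matrix.fromCols (Matrix.blockDiagonal' E)
        (Matrix.blockDiagonal' Bx + Matrix.blockDiagonal' Axv * Φ *
          (1 - Matrix.blockDiagonal' Azv * Φ)⁻¹ * Matrix.blockDiagonal' Bz)) := by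
  intro Φ _
  exact frr_fromCols_add_mul (eq_zero_of_vecMul_blockDiagonal'_eq_zero
    fun i => (hsvd i).eq_zero_of_vecMul_eq_zero (hsub i)) _
end
end
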